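/- If (x, y, z) ∈ ℤ³ is a solution of the Diophantine equation αx² + βxy + γy² = δz² with z ≠ 0, and (a, b, c) is a fixed integral solution with c ≠ 0, then (x, y, z) is a rational multiple of (γn(an − 2bm) − (αa + βb)m², αm(bm − 2an) − (γb + βa)n², ±c(αm² + βmn + γn²)) for some coprime integers m, n with m ≥ 0. -/

import Mathlib

/-!
Write `Q(u, v) = αu² + βuv + γv²`. The line through `(a : b : c)` in the direction
`(m : n : 0)` meets the conic `Q(u, v) = δw²` a second time at
`(X(m, n) : Y(m, n) : c Q(m, n))`, the point of the statement. If `(x : y : z) ≠ (a : b : c)`,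
the chord direction `(cx − az, cy − bz)` recovers `(x : y : z)`; otherwise the tangent direction
`(βa + 2γb, −(2αa + βb))` does. The direction is non-isotropic because the discriminant and `δ`
are nonzero, and dividing it by its gcd (and by `−1` if need be) only rescales the point.
-/

lemma Int.exists_coprime_of_ne_zero {M N : ℤ} (h : M ≠ 0 ∨ N ≠ 0) :
    ∃ k m n : ℤ, k ≠ 0 ∧ Int.gcd m n = 1 ∧ 0 ≤ m ∧ M = k * m ∧ N = k * n := by
  obtain ⟨g, m, n, hg, hmn, rfl, rfl⟩ := Int.exists_gcd_one' (Int.gcd_pos_iff.2 h)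
  rcases le_or_gt 0 m with hm | hm
  · exact ⟨g, m, n, by omega, hmn, hm, mul_comm _ _, mul_comm _ _⟩
  · exact ⟨-g, -m, -n, by omega, by rwa [Int.neg_gcd, Int.gcd_neg], by omega, by ring, by ring⟩

namespace BinaryQuadratic

section CommRing

variable {R : Type*} [CommRing R] (α β γ : R)

def form (u v : R) : R := α * u ^ 2 + β * (u * v) + γ * v ^ 2

def polar (p q u v : R) : R := 2 * α * p * u + β * (p * v + q * u) + 2 * γ * q * v

def paramX (a b m n : R) : R := γ * (n * (a * n - 2 * b * m)) - (α * a + β * b) * m ^ 2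

def paramY (a b m n : R) : R := α * (m * (b * m - 2 * a * n)) - (γ * b + β * a) * n ^ 2

lemma form_mul_mul (k u v : R) : form α β γ (k * u) (k * v) = k ^ 2 * form α β γ u v := by
  unfold form; ring

lemma paramX_mul_mul (a b k m n : R) :
    paramX α β γ a b (k * m) (k * n) = k ^ 2 * paramX α β γ a b m n := by
  unfold paramX; ring

lemma paramY_mul_mul (a b k m n : R) :
    paramY α β γ a b (k * m) (k * n) = k ^ 2 * paramY α β γ a b m n := by
  unfold paramY; ring

lemma polar_sq_sub_form_mul_form (p q u v : R) :
    polar α β γ p q u v ^ 2 - 4 * form α β γ p q * form α β γ u v =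
      (β ^ 2 - 4 * α * γ) * (p * v - q * u) ^ 2 := by
  unfold polar form; ring

lemma form_tangent (a b : R) :
    form α β γ (β * a + 2 * γ * b) (-(2 * α * a + β * b)) =
      (4 * α * γ - β ^ 2) * form α β γ a b := by
  unfold form; ring

lemma paramX_tangent (a b : R) :
    paramX α β γ a b (β * a + 2 * γ * b) (-(2 * α * a + β * b)) =
      a * form α β γ (β * a + 2 * γ * b) (-(2 * α * a + β * b)) := by
  unfold paramX form; ring

lemma paramY_tangent (a b : R) :
    paramY α β γ a b (β * a + 2 * γ * b) (-(2 * α * a + β * b)) =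
      b * form α β γ (β * a + 2 * γ * b) (-(2 * α * a + β * b)) := by
  unfold paramY form; ring

variable {α β γ} {δ a b c x y z : R}

lemma mul_form_tangent_eq_paramX (h : c * x = a * z) :
    x * (c * form α β γ (β * a + 2 * γ * b) (-(2 * α * a + β * b))) =
      z * paramX α β γ a b (β * a + 2 * γ * b) (-(2 * α * a + β * b)) := by
  rw [paramX_tangent, ← mul_assoc, ← mul_assoc, mul_comm x c, h, mul_comm a z]

lemma mul_form_tangent_eq_paramY (h : c * y = b * z) :
    y * (c * form α β γ (β * a + 2 * γ * b) (-(2 * α * a + β * b))) =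
      z * paramY α β γ a b (β * a + 2 * γ * b) (-(2 * α * a + β * b)) := by
  rw [paramY_tangent, ← mul_assoc, ← mul_assoc, mul_comm y c, h, mul_comm b z]

lemma form_chord (habc : form α β γ a b = δ * c ^ 2) (hxyz : form α β γ x y = δ * z ^ 2) :
    form α β γ (c * x - a * z) (c * y - b * z) =
      c * z * (2 * δ * c * z - polar α β γ a b x y) := by
  unfold form polar at *
  linear_combination c ^ 2 * hxyz + z ^ 2 * habc

lemma mul_form_chord_eq_paramX (habc : form α β γ a b = δ * c ^ 2)
    (hxyz : form α β γ x y = δ * z ^ 2) :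
    x * (c * form α β γ (c * x - a * z) (c * y - b * z)) =
      z * paramX α β γ a b (c * x - a * z) (c * y - b * z) := by
  unfold form paramX at *
  linear_combination (a * z - c * x) * z ^ 2 * habc - (a * z - c * x) * c ^ 2 * hxyz

lemma mul_form_chord_eq_paramY (habc : form α β γ a b = δ * c ^ 2)
    (hxyz : form α β γ x y = δ * z ^ 2) :
    y * (c * form α β γ (c * x - a * z) (c * y - b * z)) =
      z * paramY α β γ a b (c * x - a * z) (c * y - b * z) := by
  unfold form paramY at *
  linear_combination (b * z - c * y) * z ^ 2 * habc - (b * z - c * y) * c ^ 2 * hxyz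

end CommRing

section Domain

variable {R : Type*} [CommRing R] [IsDomain R] {α β γ δ a b c x y z : R}

lemma eq_zero_of_form_eq_zero_of_mul_eq [NeZero (2 : R)] {m n : R} (hab : form α β γ a b ≠ 0)
    (hcol : b * m = a * n) (hmn : form α β γ m n = 0) : m = 0 ∧ n = 0 := by
  have hpolar : polar α β γ a b m n = 0 := by
    have := polar_sq_sub_form_mul_form α β γ a b m n
    rw [hmn, show a * n - b * m = 0 by rw [hcol, sub_self]] at this
    exact pow_eq_zero_iff two_ne_zero |>.mp (by linear_combination this)
  have hm : 2 * m * form α β γ a b = 0 := by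
    unfold form polar at *
    linear_combination a * hpolar + (β * a + 2 * γ * b) * hcol
  have hn : 2 * n * form α β γ a b = 0 := by
    unfold form polar at *
    linear_combination b * hpolar - (2 * α * a + β * b) * hcol
  simp only [mul_eq_zero, two_ne_zero, hab, false_or, or_false] at hm hn
  exact ⟨hm, hn⟩

lemma mul_eq_mul_of_polar_eq (hdisc : β ^ 2 ≠ 4 * α * γ) (habc : form α β γ a b = δ * c ^ 2)
    (hxyz : form α β γ x y = δ * z ^ 2) (hpolar : polar α β γ a b x y = 2 * δ * c * z) :
    a * y = b * x := by
  have := polar_sq_sub_form_mul_form α β γ a b x y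
  rw [habc, hxyz, hpolar] at this
  have hsq : (β ^ 2 - 4 * α * γ) * (a * y - b * x) ^ 2 = 0 := by linear_combination -this
  simp only [mul_eq_zero, sub_eq_zero, hdisc, false_or, pow_eq_zero_iff two_ne_zero] at hsq
  exact hsq

lemma chord_eq_zero_of_form_eq_zero [NeZero (2 : R)] (hdisc : β ^ 2 ≠ 4 * α * γ) (hδ : δ ≠ 0)
    (hc : c ≠ 0) (hz : z ≠ 0) (habc : form α β γ a b = δ * c ^ 2)
    (hxyz : form α β γ x y = δ * z ^ 2)
    (hchord : form α β γ (c * x - a * z) (c * y - b * z) = 0) :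
    c * x - a * z = 0 ∧ c * y - b * z = 0 := by
  have hpolar : polar α β γ a b x y = 2 * δ * c * z := by
    have h := (form_chord habc hxyz).symm.trans hchord
    exact (sub_eq_zero.1 ((mul_eq_zero.1 h).resolve_left (mul_ne_zero hc hz))).symm
  have hcol := mul_eq_mul_of_polar_eq hdisc habc hxyz hpolar
  refine eq_zero_of_form_eq_zero_of_mul_eq (a := a) (b := b) ?_ ?_ hchord
  · exact habc ▸ mul_ne_zero hδ (pow_ne_zero 2 hc)
  · linear_combination (-c) * hcol

end Domain

@[simp, norm_cast]
lemma cast_form {S : Type*} [CommRing S] (α β γ u v : ℤ) :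
    ((form α β γ u v : ℤ) : S) = form (α : S) β γ u v := by
  simp [form]

@[simp, norm_cast]
lemma cast_paramX {S : Type*} [CommRing S] (α β γ a b m n : ℤ) :
    ((paramX α β γ a b m n : ℤ) : S) = paramX (α : S) β γ a b m n := by
  simp [paramX]

@[simp, norm_cast]
lemma cast_paramY {S : Type*} [CommRing S] (α β γ a b m n : ℤ) :
    ((paramY α β γ a b m n : ℤ) : S) = paramY (α : S) β γ a b m n := by
  simp [paramY]

lemma exists_coprime_rat_multiple {α β γ a b c x y z M N : ℤ} (hc : c ≠ 0)
    (hQ : form α β γ M N ≠ 0)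
    (hx : x * (c * form α β γ M N) = z * paramX α β γ a b M N)
    (hy : y * (c * form α β γ M N) = z * paramY α β γ a b M N) :
    ∃ m n : ℤ, Int.gcd m n = 1 ∧ 0 ≤ m ∧ ∃ t : ℚ,
      (x : ℚ) = t * paramX (α : ℚ) β γ a b m n ∧ (y : ℚ) = t * paramY (α : ℚ) β γ a b m n ∧
      (z : ℚ) = t * (c * form (α : ℚ) β γ m n) := by
  obtain ⟨k, m, n, hk, hmn, hm, rfl, rfl⟩ := Int.exists_coprime_of_ne_zero (M := M) (N := N) (by
    contrapose! hQ
    simp [hQ.1, hQ.2, form])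
  rw [form_mul_mul] at hQ hx hy
  rw [paramX_mul_mul] at hx
  rw [paramY_mul_mul] at hy
  have hk2 : k ^ 2 ≠ 0 := pow_ne_zero 2 hk
  have hd : (c : ℚ) * form (α : ℚ) β γ m n ≠ 0 := by
    exact_mod_cast mul_ne_zero hc (right_ne_zero_of_mul hQ)
  have hx' : (x : ℚ) * (c * form (α : ℚ) β γ m n) = z * paramX (α : ℚ) β γ a b m n := by
    exact_mod_cast mul_left_cancel₀ hk2 (by linear_combination hx)
  have hy' : (y : ℚ) * (c * form (α : ℚ) β γ m n) = z * paramY (α : ℚ) β γ a b m n := by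
    exact_mod_cast mul_left_cancel₀ hk2 (by linear_combination hy)
  refine ⟨m, n, hmn, hm, z / (c * form (α : ℚ) β γ m n), ?_, ?_, ?_⟩
  all_goals rw [div_mul_eq_mul_div, eq_div_iff hd]
  exacts [hx', hy']

end BinaryQuadratic

open BinaryQuadratic in
theorem stmt_0 (α β γ δ a b c x y z : ℤ)
    (hdisc : β ^ 2 ≠ 4 * α * γ) (hδ : δ ≠ 0)
    (habc : α * a ^ 2 + β * (a * b) + γ * b ^ 2 = δ * c ^ 2) (hc : c ≠ 0)
    (hxyz : α * x ^ 2 + β * (x * y) + γ * y ^ 2 = δ * z ^ 2) (hz : z ≠ 0) :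
    ∃ m n : ℤ, Int.gcd m n = 1 ∧ 0 ≤ m ∧ ∃ (t : ℚ) (ε : ℤ), (ε = 1 ∨ ε = -1) ∧
      (x : ℚ) = t * (γ * (n * (a * n - 2 * b * m)) - (α * a + β * b) * m ^ 2) ∧
      (y : ℚ) = t * (α * (m * (b * m - 2 * a * n)) - (γ * b + β * a) * n ^ 2) ∧
      (z : ℚ) = t * (ε * c * (α * m ^ 2 + β * (m * n) + γ * n ^ 2)) := by
  have habc' : form α β γ a b = δ * c ^ 2 := habc
  have hxyz' : form α β γ x y = δ * z ^ 2 := hxyz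
  obtain ⟨M, N, hQ, hx, hy⟩ : ∃ M N : ℤ, form α β γ M N ≠ 0 ∧
      x * (c * form α β γ M N) = z * paramX α β γ a b M N ∧
      y * (c * form α β γ M N) = z * paramY α β γ a b M N := by
    by_cases htan : c * x - a * z = 0 ∧ c * y - b * z = 0
    · refine ⟨_, _, ?_, mul_form_tangent_eq_paramX (sub_eq_zero.1 htan.1),
        mul_form_tangent_eq_paramY (sub_eq_zero.1 htan.2)⟩
      rw [form_tangent, habc']
      exact mul_ne_zero (sub_ne_zero.2 (Ne.symm hdisc)) (mul_ne_zero hδ (pow_ne_zero 2 hc))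
    · exact ⟨_, _, fun h ↦ htan (chord_eq_zero_of_form_eq_zero hdisc hδ hc hz habc' hxyz' h),
        mul_form_chord_eq_paramX habc' hxyz', mul_form_chord_eq_paramY habc' hxyz'⟩
  obtain ⟨m, n, hmn, hm, t, hxt, hyt, hzt⟩ := exists_coprime_rat_multiple hc hQ hx hy
  refine ⟨m, n, hmn, hm, t, 1, Or.inl rfl, hxt, hyt, ?_⟩
  rw [hzt, form]
  push_cast
  ring
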